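/- arXiv:2303.16700 — 2 statements merged into one kernel-verified Lean document; each statement's English description precedes it below -/
import Mathlib

section
/- Let P be a set of n ≥ 3 points in general position in the plane. A thrackle of P is a set T of segments of P such that any two segments in T either share an endpoint or cross properly (intersect in a point interior to both). Then the maximum number of segments in a thrackle of P is either n−1 or n. -/
noncomputable section

/-- Points of the plane. -/
abbrev Pl := ℝ × ℝ

/-- `P` is in general position: no three (distinct) points of `P` are collinear. -/
def GenPos (P : Set Pl) : Prop :=
  ∀ a ∈ P, ∀ b ∈ P, ∀ c ∈ P, a ≠ b → a ≠ c → b ≠ c →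
    ¬ Collinear ℝ ({a, b, c} : Set Pl)

/-- The set of all closed straight-line segments with (distinct) endpoints in `P`. -/
def Segs (P : Set Pl) : Set (Set Pl) :=
  {s | ∃ a ∈ P, ∃ b ∈ P, a ≠ b ∧ s = segment ℝ a b}

/-- The edge disjointness graph of `P`: vertices are the segments of `P`,
two of them adjacent iff they are disjoint. -/
def DisjGraph (P : Set Pl) : SimpleGraph ↥(Segs P) where
  Adj s t := Disjoint (s : Set Pl) (t : Set Pl)
  symm := ⟨fun _ _ h => h.symm⟩
  loopless := by
    constructor
    rintro ⟨s, a, ha, b, hb, hab, rfl⟩ h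
    exact (Set.not_disjoint_iff.2
      ⟨a, left_mem_segment ℝ a b, left_mem_segment ℝ a b⟩) h

/-- An independent set of vertices: pairwise non-adjacent. -/
def IsIndepSet {V : Type*} (G : SimpleGraph V) (s : Set V) : Prop :=
  s.Pairwise fun a b => ¬ G.Adj a b

/-- Twice the signed area of the triangle `a b c`; its sign is the orientation. -/
def det3 (a b c : Pl) : ℝ :=
  (b.1 - a.1) * (c.2 - a.2) - (b.2 - a.2) * (c.1 - a.1)

/-- `p 0, …, p (n-1)` are in convex position, appearing in this
(counterclockwise) cyclic order on their convex hull. -/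
def ConvexCyclic {n : ℕ} (p : Fin n → Pl) : Prop :=
  ∀ i j k : Fin n, i < j → j < k → 0 < det3 (p i) (p j) (p k)

/-- `P` is in convex position: every point of `P` is a vertex of the convex hull. -/
def ConvexPos (P : Set Pl) : Prop :=
  ∀ x ∈ P, x ∉ convexHull ℝ (P \ {x})

/-- `P` and `Q` have the same order type. -/
def SameOrderType (P Q : Set Pl) : Prop :=
  ∃ γ : Pl → Pl, Set.BijOn γ P Q ∧
    ∀ a ∈ P, ∀ b ∈ P, ∀ c ∈ P,
      Real.sign (det3 a b c) = Real.sign (det3 (γ a) (γ b) (γ c))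

/-- A thrackle of `P`: a set of segments of `P`, any two of which intersect. -/
def IsThrackle (P : Set Pl) (T : Set (Set Pl)) : Prop :=
  T ⊆ Segs P ∧ ∀ s ∈ T, ∀ t ∈ T, s ≠ t → ¬ Disjoint s t

end

/-! A segment `pq` of a thrackle `T` has `p` as a pivot if every other segment of `T` at `p`
turns counterclockwise from `pq`. Every segment of `T` has a pivot endpoint, and two segments
`pq`, `pq'` of `T` cannot share the pivot `p`, since each would have to turn counterclockwise
from the other. So choosing a pivot is injective on `T`, and `|T| ≤ n`. A star at one point is
a thrackle with `n - 1` segments. -/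

open Set

theorem segment_right_injective {𝕜 E : Type*} [Field 𝕜] [LinearOrder 𝕜] [IsStrictOrderedRing 𝕜]
    [AddCommGroup E] [Module 𝕜 E] (a : E) : Function.Injective (segment 𝕜 a) := by
  intro b c h
  have hcb : Wbtw 𝕜 a c b := mem_segment_iff_wbtw.1 (h ▸ right_mem_segment 𝕜 a c)
  have hbc : Wbtw 𝕜 a b c := mem_segment_iff_wbtw.1 (h.symm ▸ right_mem_segment 𝕜 a b)
  exact (wbtw_swap_right_iff 𝕜 a).1 ⟨hbc, hcb⟩

theorem det3_swap_left (a b c : Pl) : det3 b a c = -det3 a b c := by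
  simp only [det3]; ring

theorem det3_swap_right (a b c : Pl) : det3 a c b = -det3 a b c := by
  simp only [det3]; ring

theorem det3_repeat_first (p q : Pl) : det3 p q p = 0 := by
  simp only [det3]; ring

theorem det3_repeat_second (p q : Pl) : det3 p q q = 0 := by
  simp only [det3]; ring

theorem det3_add_smul_sub (p q x y : Pl) (θ : ℝ) :
    det3 p q (x + θ • (y - x)) = (1 - θ) * det3 p q x + θ * det3 p q y := by
  simp only [det3, Prod.fst_add, Prod.snd_add, Prod.smul_fst, Prod.smul_snd, Prod.fst_sub,
    Prod.snd_sub, smul_eq_mul]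
  ring

theorem collinear_of_det3_eq_zero {p q a : Pl} (hpq : p ≠ q) (h : det3 p q a = 0) :
    Collinear ℝ ({p, q, a} : Set Pl) := by
  rw [collinear_iff_of_mem (mem_insert p _)]
  refine ⟨q - p, ?_⟩
  have hN : (q.1 - p.1) ^ 2 + (q.2 - p.2) ^ 2 ≠ 0 := by
    intro h0
    exact hpq (Prod.ext (by nlinarith [sq_nonneg (q.1 - p.1), sq_nonneg (q.2 - p.2)])
      (by nlinarith [sq_nonneg (q.1 - p.1), sq_nonneg (q.2 - p.2)]))
  rintro x (rfl | rfl | rfl)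
  · exact ⟨0, by simp⟩
  · exact ⟨1, by simp⟩
  · -- the projection coefficient of `x - p` on `q - p`; `det3 = 0` makes the residual vanish
    refine ⟨((x.1 - p.1) * (q.1 - p.1) + (x.2 - p.2) * (q.2 - p.2)) /
      ((q.1 - p.1) ^ 2 + (q.2 - p.2) ^ 2), ?_⟩
    simp only [det3] at h
    ext <;> simp only [vadd_eq_add, Prod.fst_add, Prod.snd_add, Prod.smul_fst, Prod.smul_snd,
      Prod.fst_sub, Prod.snd_sub, smul_eq_mul] <;> field_simp
    · linear_combination -(q.2 - p.2) * h
    · linear_combination (q.1 - p.1) * h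

theorem GenPos.det3_ne_zero {P : Set Pl} (hgp : GenPos P) {p q a : Pl}
    (hp : p ∈ P) (hq : q ∈ P) (ha : a ∈ P) (hpq : p ≠ q) (hpa : p ≠ a) (hqa : q ≠ a) :
    det3 p q a ≠ 0 := fun h =>
  hgp p hp q hq a ha hpq hpa hqa (collinear_of_det3_eq_zero hpq h)

theorem disjoint_segment_of_det3_neg_of_pos {p q a b : Pl} (hpq : p ≠ q)
    (ha : det3 p q a < 0) (hb : 0 < det3 p q b) :
    Disjoint (segment ℝ p a) (segment ℝ q b) := by
  rw [disjoint_left]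
  intro x hxa hxb
  rw [segment_eq_image'] at hxa hxb
  obtain ⟨θ, ⟨hθ, -⟩, rfl⟩ := hxa
  obtain ⟨σ, ⟨hσ, -⟩, hx : q + σ • (b - q) = p + θ • (a - p)⟩ := hxb
  have hdet : σ * det3 p q b = θ * det3 p q a := by
    have h₁ := det3_add_smul_sub p q p a θ
    have h₂ := det3_add_smul_sub p q q b σ
    rw [det3_repeat_first] at h₁
    rw [det3_repeat_second, hx] at h₂
    linarith
  have hθ0 : θ = 0 := by nlinarith
  have hσ0 : σ = 0 := by nlinarith
  subst hθ0 hσ0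
  exact hpq (by simpa using hx.symm)

def IsPivot (P : Set Pl) (T : Set (Set Pl)) (p q : Pl) : Prop :=
  ∀ a ∈ P, a ≠ p → a ≠ q → segment ℝ p a ∈ T → 0 < det3 p q a

theorem GenPos.exists_det3_neg_of_not_isPivot {P : Set Pl} (hgp : GenPos P)
    {T : Set (Set Pl)} {p q : Pl} (hp : p ∈ P) (hq : q ∈ P) (hpq : p ≠ q)
    (h : ¬IsPivot P T p q) : ∃ a, segment ℝ p a ∈ T ∧ det3 p q a < 0 := by
  simp only [IsPivot, not_forall, not_lt] at h
  obtain ⟨a, ha, hap, haq, haT, hdet⟩ := h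
  exact ⟨a, haT, hdet.lt_of_ne (hgp.det3_ne_zero hp hq ha hpq (Ne.symm hap) (Ne.symm haq))⟩

namespace IsThrackle

variable {P : Set Pl} {T : Set (Set Pl)}

/-- If neither endpoint of `pq ∈ T` were a pivot, there would be segments `pa, qb ∈ T` with `a`
and `b` strictly on opposite sides of the line `pq`; these two segments are disjoint. -/
theorem exists_isPivot (hgp : GenPos P) (hT : IsThrackle P T) {t : Set Pl} (ht : t ∈ T) :
    ∃ p ∈ P, ∃ q ∈ P, p ≠ q ∧ t = segment ℝ p q ∧ IsPivot P T p q := by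
  obtain ⟨p, hp, q, hq, hpq, rfl⟩ := hT.1 ht
  by_cases hpiv : IsPivot P T p q
  · exact ⟨p, hp, q, hq, hpq, rfl, hpiv⟩
  by_cases hpiv' : IsPivot P T q p
  · exact ⟨q, hq, p, hp, hpq.symm, segment_symm ℝ p q, hpiv'⟩
  obtain ⟨a, haT, ha⟩ := hgp.exists_det3_neg_of_not_isPivot hp hq hpq hpiv
  obtain ⟨b, hbT, hb⟩ := hgp.exists_det3_neg_of_not_isPivot hq hp hpq.symm hpiv'
  rw [det3_swap_left] at hb
  have hdisj := disjoint_segment_of_det3_neg_of_pos hpq ha (neg_neg_iff_pos.1 hb)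
  have hne : segment ℝ p a ≠ segment ℝ q b := fun h =>
    disjoint_left.1 hdisj (left_mem_segment ℝ p a) (h ▸ left_mem_segment ℝ p a)
  exact (hT.2 _ haT _ hbT hne hdisj).elim

theorem ncard_le_ncard (hP : P.Finite) (hgp : GenPos P) (hT : IsThrackle P T) :
    T.ncard ≤ P.ncard := by
  choose! p hp q hq hpq hseg hpiv using fun t (ht : t ∈ T) => hT.exists_isPivot hgp ht
  refine ncard_le_ncard_of_injOn p hp (fun s hs t ht hst => ?_) hP
  by_contra hne
  have hqt : q t ≠ q s := fun h => hne (by rw [hseg s hs, hseg t ht, hst, h])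
  have hs' : segment ℝ (p s) (q s) ∈ T := hseg s hs ▸ hs
  have ht' : segment ℝ (p s) (q t) ∈ T := hst ▸ hseg t ht ▸ ht
  have h₁ := hpiv s hs (q t) (hq t ht) (hst ▸ (hpq t ht).symm) hqt ht'
  have h₂ := hpiv t ht (q s) (hq s hs) (hst ▸ (hpq s hs).symm) hqt.symm (hst ▸ hs')
  rw [← hst, det3_swap_right] at h₂
  linarith

end IsThrackle

theorem exists_isThrackle_ncard_eq_sub_one (P : Set Pl) :
    ∃ T, IsThrackle P T ∧ T.ncard = P.ncard - 1 := by
  rcases P.eq_empty_or_nonempty with rfl | ⟨a, ha⟩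
  · exact ⟨∅, ⟨empty_subset _, by simp⟩, by simp⟩
  refine ⟨segment ℝ a '' (P \ {a}), ⟨?_, ?_⟩, ?_⟩
  · rintro _ ⟨b, ⟨hb, hba⟩, rfl⟩
    exact ⟨a, ha, b, hb, Ne.symm hba, rfl⟩
  · rintro _ ⟨b, -, rfl⟩ _ ⟨c, -, rfl⟩ -
    exact not_disjoint_iff.2 ⟨a, left_mem_segment ℝ a b, left_mem_segment ℝ a c⟩
  · rw [(segment_right_injective a).injOn.ncard_image, ncard_sdiff_singleton_of_mem ha]

theorem stmt_1_general (P : Finset Pl) (hgp : GenPos ↑P) :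
    ∃ m : ℕ, (m = P.card - 1 ∨ m = P.card) ∧
      (∀ T : Set (Set Pl), IsThrackle ↑P T → T.ncard ≤ m) ∧
      (∃ T : Set (Set Pl), IsThrackle ↑P T ∧ T.ncard = m) := by
  have hle : ∀ T, IsThrackle ↑P T → T.ncard ≤ P.card := fun T hT => by
    simpa using hT.ncard_le_ncard P.finite_toSet hgp
  by_cases hmax : ∃ T, IsThrackle ↑P T ∧ T.ncard = P.card
  · exact ⟨P.card, Or.inr rfl, hle, hmax⟩
  push Not at hmax
  refine ⟨P.card - 1, Or.inl rfl, fun T hT => ?_, by simpa using exists_isThrackle_ncard_eq_sub_one ↑P⟩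
  have := hle T hT
  have := hmax T hT
  omega

/-- the maximum size of a thrackle of `P` is `n - 1` or `n`. -/
theorem stmt_1 (P : Finset Pl) (hn : 3 ≤ P.card) (hgp : GenPos ↑P) :
    ∃ m : ℕ, (m = P.card - 1 ∨ m = P.card) ∧
      (∀ T : Set (Set Pl), IsThrackle ↑P T → T.ncard ≤ m) ∧
      (∃ T : Set (Set Pl), IsThrackle ↑P T ∧ T.ncard = m) :=
  stmt_1_general P hgp
end

section
/- If G is a finite connected graph with independence number α(G) at most its vertex connectivity κ(G), then G is Hamiltonian (contains a spanning cycle), provided G has at least 3 vertices. -/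
/-! A longest cycle `C` exists once there is any cycle, and there is one: some vertex `b` has two
neighbours `x ≠ y`, and a path from `x` to `y` avoiding `b` exists because either `x ∼ y` or
`{x, y}` is independent, which forces `κ ≥ 2`. If a vertex `v` lies off `C`, let `S` be the
vertices of `C` adjacent to the component of `v` in `G - C`. For `s ∈ S` let `s⁺` be its successor
on `C`. Were `s⁺ ∈ S`, or `s⁺ ∼ t⁺` for `s ≠ t` in `S`, a detour through that component would
give a longer cycle; hence `v` together with the `s⁺` is an independent set of size `|S| + 1`.
But `S` separates `v` from the rest of `C`, so `|S| ≥ κ ≥ α ≥ |S| + 1`. -/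

namespace SimpleGraph

variable {V : Type*} {G : SimpleGraph V}

namespace Walk

lemma end_mem_of_forall_adj_mem {W : Set V} {u w : V} (p : G.Walk u w) (hu : u ∈ W)
    (hW : ∀ a ∈ W, ∀ b, G.Adj a b → b ∈ W) : w ∈ W := by
  induction p with
  | nil => exact hu
  | cons h _ ih => exact ih (hW _ hu _ h)

lemma IsCycle.length_le_card [Fintype V] {u : V} {c : G.Walk u u} (hc : c.IsCycle) :
    c.length ≤ Fintype.card V := by
  have := hc.isPath_tail.length_lt
  rw [← length_tail_add_one hc.not_nil]
  omega

lemma IsPath.start_notMem_support_tail {u v : V} {p : G.Walk u v} (hp : p.IsPath) :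
    u ∉ p.support.tail := by
  have := hp.support_nodup
  rw [← cons_tail_support] at this
  exact (List.nodup_cons.mp this).1

lemma IsPath.isCycle_append_detour {a b h₁ h₂ : V} {q : G.Walk a b} (hq : q.IsPath) (hab : a ≠ b)
    {P : G.Walk h₁ h₂} (hP : P.IsPath) (hPq : ∀ y ∈ P.support, y ∉ q.support)
    (hb : G.Adj b h₁) (ha : G.Adj h₂ a) :
    (q.append (cons hb (P.concat ha))).IsCycle := by
  have haP : a ∉ P.support := fun h => hPq a h q.start_mem_support
  have hbP : b ∉ (P.concat ha).support := by
    rw [support_concat, List.mem_append, List.mem_singleton, not_or]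
    exact ⟨fun h => hPq b h q.end_mem_support, hab.symm⟩
  refine hq.isCycle_append ((hP.concat haP ha).cons hbP) ?_ (Or.inr (by simp))
  rw [support_cons, List.tail_cons, support_concat]
  intro y hyq hyP
  rcases List.mem_append.mp hyP with hy | hy
  · exact hPq y hy (List.mem_of_mem_tail hyq)
  · rw [List.mem_singleton.mp hy] at hyq
    exact hq.start_notMem_support_tail hyq

lemma mem_support_tail_iff_of_not_nil {u w : V} {c : G.Walk u u} (hc : ¬ c.Nil) :
    w ∈ c.support.tail ↔ w ∈ c.support := by
  refine ⟨List.mem_of_mem_tail, fun hw => ?_⟩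
  rcases c.mem_support_iff.mp hw with rfl | hw
  · exact end_mem_tail_support hc
  · exact hw

lemma IsCycle.dart_eq_of_fst_eq {u : V} {c : G.Walk u u} (hc : c.IsCycle) {d e : G.Dart}
    (hd : d ∈ c.darts) (he : e ∈ c.darts) (h : d.fst = e.fst) : d = e :=
  List.inj_on_of_nodup_map (by rw [map_fst_darts]; exact hc.nodup_dropLast_support) hd he h

lemma IsCycle.dart_eq_of_snd_eq {u : V} {c : G.Walk u u} (hc : c.IsCycle) {d e : G.Dart}
    (hd : d ∈ c.darts) (he : e ∈ c.darts) (h : d.snd = e.snd) : d = e :=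
  List.inj_on_of_nodup_map (by rw [map_snd_darts]; exact hc.support_nodup) hd he h

lemma support_reverse_append_cons_perm {a b c d : V} (A : G.Walk a b) (hbc : G.Adj b c)
    (R : G.Walk c d) (hca : G.Adj c a) :
    (R.reverse.append (cons hca A)).support.Perm (A.append (cons hbc R)).support := by
  simp only [support_append, support_reverse, support_cons, List.tail_cons]
  exact ((List.reverse_perm _).append_right _).trans List.perm_append_comm

lemma IsCycle.isHamiltonianCycle_of_forall_mem [DecidableEq V] {x : V} {C : G.Walk x x}
    (hC : C.IsCycle) (hall : ∀ w, w ∈ C.support) : C.IsHamiltonianCycle := by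
  refine isHamiltonianCycle_isCycle_and_isHamiltonian_tail.mpr
    ⟨hC, hC.isPath_tail.isHamiltonian_of_mem fun w => ?_⟩
  rw [support_tail_of_not_nil _ hC.not_nil, mem_support_tail_iff_of_not_nil hC.not_nil]
  exact hall w

end Walk

lemma Connected.exists_adj_adj [Fintype V] (hconn : G.Connected) (h3 : 3 ≤ Fintype.card V) :
    ∃ b x y, G.Adj b x ∧ G.Adj b y ∧ x ≠ y := by
  classical
  by_contra! h
  obtain ⟨a, c, hac⟩ := Fintype.exists_pair_of_one_lt_card (by omega : 1 < Fintype.card V)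
  obtain ⟨p⟩ := hconn.preconnected a c
  have haz : G.Adj a p.snd := p.adj_snd (Walk.not_nil_of_ne hac)
  have hclosed : ∀ w ∈ ({a, p.snd} : Finset V), ∀ y, G.Adj w y → y ∈ ({a, p.snd} : Finset V) := by
    intro w hw y hwy
    rcases Finset.mem_insert.mp hw with rfl | hw
    · simp [h _ _ _ hwy haz]
    · rw [Finset.mem_singleton.mp hw] at hwy
      simp [h _ _ _ hwy haz.symm]
  have hsub : (Finset.univ : Finset V) ⊆ {a, p.snd} := fun w _ =>
    (hconn.preconnected a w).some.end_mem_of_forall_adj_mem (W := {y | y ∈ ({a, p.snd} : Finset V)})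
      (by simp) hclosed
  have := (Finset.card_le_card hsub).trans Finset.card_le_two
  rw [Finset.card_univ] at this
  omega

lemma Reachable.exists_isPath_of_induce {S : Set V} {x y : S} (h : (G.induce S).Reachable x y) :
    ∃ q : G.Walk x y, q.IsPath ∧ ∀ z ∈ q.support, z ∈ S := by
  classical
  obtain ⟨w⟩ := h
  refine ⟨(w.map (Embedding.induce S).toHom).bypass, Walk.bypass_isPath _, fun z hz => ?_⟩
  have hz' := Walk.support_bypass_subset_support _ hz
  obtain ⟨z', -, rfl⟩ := List.mem_map.mp (Walk.support_map _ _ ▸ hz')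
  exact z'.2

lemma exists_isCycle_of_isPath_avoiding {b x y : V} (hbx : G.Adj b x) (hby : G.Adj b y)
    (hxy : x ≠ y) {q : G.Walk x y} (hq : q.IsPath) (hbq : b ∉ q.support) :
    ∃ c : G.Walk b b, c.IsCycle := by
  refine ⟨(Walk.cons hbx q).append hby.symm.toWalk,
    (hq.cons hbq).isCycle_append hby.symm.isPath_toWalk ?_ (Or.inl ?_)⟩
  · simpa using hbq
  · simpa using Walk.not_nil_iff_lt_length.mp (Walk.not_nil_of_ne hxy)

lemma exists_isCycle_of_indepSet_le_cut [Fintype V] (h3 : 3 ≤ Fintype.card V)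
    (hconn : G.Connected) (k : ℕ) (hα : ∀ X : Set V, G.IsIndepSet X → X.ncard ≤ k)
    (hκ : ∀ U : Set V, ¬ (G.induce Uᶜ).Connected → k ≤ U.ncard) :
    ∃ (u : V) (c : G.Walk u u), c.IsCycle := by
  obtain ⟨b, x, y, hbx, hby, hxy⟩ := hconn.exists_adj_adj h3
  suffices ∃ q : G.Walk x y, q.IsPath ∧ b ∉ q.support by
    obtain ⟨q, hq, hbq⟩ := this
    exact ⟨b, exists_isCycle_of_isPath_avoiding hbx hby hxy hq hbq⟩
  by_cases hxy_adj : G.Adj x y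
  · exact ⟨hxy_adj.toWalk, hxy_adj.isPath_toWalk, by simp [hbx.ne, hby.ne]⟩
  have hk : 2 ≤ k := by
    have := hα {x, y} (Set.pairwise_pair.mpr fun _ => ⟨hxy_adj, fun h => hxy_adj h.symm⟩)
    rwa [Set.ncard_pair hxy] at this
  have hb : (G.induce {b}ᶜ).Connected := by
    by_contra hb
    have := hκ {b} hb
    rw [Set.ncard_singleton] at this
    omega
  obtain ⟨q, hq, hqb⟩ := (hb.preconnected ⟨x, hbx.ne'⟩ ⟨y, hby.ne'⟩).exists_isPath_of_induce
  exact ⟨q, hq, fun h => hqb b h rfl⟩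

lemma exists_isCycle_forall_length_le [Fintype V] (h : ∃ (u : V) (c : G.Walk u u), c.IsCycle) :
    ∃ (x : V) (C : G.Walk x x), C.IsCycle ∧
      ∀ (z : V) (N : G.Walk z z), N.IsCycle → N.length ≤ C.length := by
  set L := {l | ∃ (z : V) (N : G.Walk z z), N.IsCycle ∧ N.length = l}
  have hL : BddAbove L := ⟨Fintype.card V, by rintro _ ⟨z, N, hN, rfl⟩; exact hN.length_le_card⟩
  obtain ⟨u, c, hc⟩ := h
  obtain ⟨x, C, hC, hlen⟩ : sSup L ∈ L := Nat.sSup_mem ⟨c.length, u, c, hc, rfl⟩ hL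
  exact ⟨x, C, hC, fun z N hN => hlen ▸ le_csSup hL ⟨z, N, hN, rfl⟩⟩

section ReachAvoiding

variable {A : Set V} {v w y : V}

def reachAvoiding (G : SimpleGraph V) (A : Set V) (v : V) : Set V :=
  {w | ∃ p : G.Walk v w, ∀ y ∈ p.support, y ∉ A}

lemma notMem_of_mem_reachAvoiding (hw : w ∈ G.reachAvoiding A v) : w ∉ A :=
  let ⟨p, hp⟩ := hw
  hp w p.end_mem_support

lemma mem_reachAvoiding_self (hv : v ∉ A) : v ∈ G.reachAvoiding A v :=
  ⟨.nil, by simpa using hv⟩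

lemma mem_reachAvoiding_of_adj (hw : w ∈ G.reachAvoiding A v) (hwy : G.Adj w y) (hy : y ∉ A) :
    y ∈ G.reachAvoiding A v := by
  obtain ⟨p, hp⟩ := hw
  refine ⟨p.concat hwy, fun z hz => ?_⟩
  rw [Walk.support_concat, List.mem_append, List.mem_singleton] at hz
  rcases hz with hz | rfl
  · exact hp z hz
  · exact hy

lemma exists_isPath_of_mem_reachAvoiding [DecidableEq V] {h₁ h₂ : V}
    (h₁A : h₁ ∈ G.reachAvoiding A v) (h₂A : h₂ ∈ G.reachAvoiding A v) :
    ∃ P : G.Walk h₁ h₂, P.IsPath ∧ ∀ y ∈ P.support, y ∉ A := by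
  obtain ⟨p₁, hp₁⟩ := h₁A
  obtain ⟨p₂, hp₂⟩ := h₂A
  refine ⟨(p₁.reverse.append p₂).bypass, Walk.bypass_isPath _, fun y hy => ?_⟩
  rcases (Walk.mem_support_append_iff _ _).mp (Walk.support_bypass_subset_support _ hy) with hy | hy
  · exact hp₁ y (by simpa using hy)
  · exact hp₂ y hy

lemma not_reachable_induce_compl_of_attachments {S : Set V} {c : V} (hvA : v ∉ A) (hcA : c ∈ A)
    (hS : ∀ s ∈ A, ∀ w ∈ G.reachAvoiding A v, G.Adj s w → s ∈ S) (hv : v ∉ S) (hc : c ∉ S) :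
    ¬ (G.induce Sᶜ).Reachable ⟨v, hv⟩ ⟨c, hc⟩ := by
  rintro ⟨p⟩
  refine notMem_of_mem_reachAvoiding (p.end_mem_of_forall_adj_mem
    (W := {y : ↥Sᶜ | y.1 ∈ G.reachAvoiding A v}) (mem_reachAvoiding_self hvA) ?_) hcA
  intro a ha b hab
  by_cases hbA : b.1 ∈ A
  · exact absurd (hS b hbA a ha hab.symm) b.2
  · exact mem_reachAvoiding_of_adj ha hab hbA

end ReachAvoiding

namespace Walk

section CycleSucc

variable [DecidableEq V] {x s : V} {C : G.Walk x x}

def cycleSucc (C : G.Walk x x) (s : V) : V :=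
  if hs : s ∈ C.support then (C.rotate s hs).snd else s

lemma cycleSucc_of_mem (hs : s ∈ C.support) : C.cycleSucc s = (C.rotate s hs).snd :=
  dif_pos hs

lemma IsCycle.adj_cycleSucc (hC : C.IsCycle) (hs : s ∈ C.support) : G.Adj s (C.cycleSucc s) := by
  rw [cycleSucc_of_mem hs]
  exact adj_snd (hC.rotate hs).not_nil

lemma IsCycle.mk_cycleSucc_mem_darts (hC : C.IsCycle) (hs : s ∈ C.support) :
    ⟨(s, C.cycleSucc s), hC.adj_cycleSucc hs⟩ ∈ C.darts := by
  have hR := hC.rotate hs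
  convert (C.rotate_darts s hs).perm.mem_iff.mp (firstDart_mem_darts hR.not_nil) using 1
  ext <;> simp [cycleSucc_of_mem hs]

lemma IsCycle.cycleSucc_mem_support (hC : C.IsCycle) (hs : s ∈ C.support) :
    C.cycleSucc s ∈ C.support :=
  C.dart_snd_mem_support_of_mem_darts (hC.mk_cycleSucc_mem_darts hs)

lemma IsCycle.snd_eq_cycleSucc (hC : C.IsCycle) {d : G.Dart} (hd : d ∈ C.darts) :
    d.snd = C.cycleSucc d.fst := by
  have hs := C.dart_fst_mem_support_of_mem_darts hd
  rw [hC.dart_eq_of_fst_eq hd (hC.mk_cycleSucc_mem_darts hs) rfl]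

lemma IsCycle.injOn_cycleSucc (hC : C.IsCycle) : Set.InjOn C.cycleSucc {s | s ∈ C.support} :=
  fun _ hs _ ht h => congrArg (fun d : G.Dart => d.fst)
    (hC.dart_eq_of_snd_eq (hC.mk_cycleSucc_mem_darts hs) (hC.mk_cycleSucc_mem_darts ht) h)

lemma IsCycle.exists_isPath_cycleSucc (hC : C.IsCycle) (hs : s ∈ C.support) :
    ∃ Q : G.Walk (C.cycleSucc s) s, Q.IsPath ∧ Q.length + 1 = C.length ∧
      (∀ y, y ∈ Q.support ↔ y ∈ C.support) ∧ Q.darts ⊆ C.darts := by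
  have hR := hC.rotate hs
  refine ⟨(C.rotate s hs).tail.copy (cycleSucc_of_mem hs).symm rfl, ?_, ?_, fun y => ?_, ?_⟩
  · simpa using hR.isPath_tail
  · rw [length_copy, length_tail_add_one hR.not_nil, length_rotate]
  · rw [support_copy, support_tail_of_not_nil _ hR.not_nil,
      mem_support_tail_iff_of_not_nil hR.not_nil, mem_support_rotate_iff]
  · intro d hd
    rw [darts_copy, darts_tail] at hd
    exact (C.rotate_darts s hs).perm.mem_iff.mp (List.mem_of_mem_tail hd)

end CycleSucc

section LongestCycle

variable [DecidableEq V] {x s t h₁ h₂ : V} {C : G.Walk x x}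

lemma IsCycle.not_adj_cycleSucc_of_detour (hC : C.IsCycle)
    (hmax : ∀ (z : V) (N : G.Walk z z), N.IsCycle → N.length ≤ C.length) (hs : s ∈ C.support)
    {P : G.Walk h₁ h₂} (hP : P.IsPath) (hPC : ∀ y ∈ P.support, y ∉ C.support)
    (hsh : G.Adj s h₁) : ¬ G.Adj h₂ (C.cycleSucc s) := by
  intro hhs
  obtain ⟨Q, hQ, hQlen, hQC, -⟩ := hC.exists_isPath_cycleSucc hs
  have := hmax _ _ <| hQ.isCycle_append_detour (hC.adj_cycleSucc hs).ne.symm hP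
    (fun y hy hyQ => hPC y hy ((hQC y).mp hyQ)) hsh hhs
  simp only [length_append, length_cons, length_concat] at this
  omega

lemma IsCycle.not_adj_cycleSucc_cycleSucc_of_detour (hC : C.IsCycle)
    (hmax : ∀ (z : V) (N : G.Walk z z), N.IsCycle → N.length ≤ C.length) (hs : s ∈ C.support)
    (ht : t ∈ C.support) (hst : s ≠ t) {P : G.Walk h₁ h₂} (hP : P.IsPath)
    (hPC : ∀ y ∈ P.support, y ∉ C.support) (hth : G.Adj t h₁) (hhs : G.Adj h₂ s) :
    ¬ G.Adj (C.cycleSucc s) (C.cycleSucc t) := by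
  intro hadj
  obtain ⟨Q, hQ, hQlen, hQC, hQd⟩ := hC.exists_isPath_cycleSucc hs
  have htQ : t ∈ Q.support := (hQC t).mpr ht
  obtain ⟨u, htu, R, hR⟩ := exists_eq_cons_of_ne hst.symm (Q.dropUntil t htQ)
  obtain rfl : u = C.cycleSucc t := hC.snd_eq_cycleSucc (d := ⟨(t, u), htu⟩)
    (hQd (Q.darts_dropUntil_subset_darts htQ (by simp [hR])))
  have hQ' : Q = (Q.takeUntil t htQ).append (cons htu R) := by rw [← hR, take_spec]
  -- the longer cycle runs from `s` back along `C` to `t⁺`, across to `s⁺`, forward along `C`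
  -- to `t`, and returns to `s` through `P`
  set q := R.reverse.append (cons hadj.symm (Q.takeUntil t htQ))
  have hperm : q.support.Perm Q.support := by
    conv_rhs => rw [hQ']
    exact support_reverse_append_cons_perm _ _ _ _
  have hq : q.IsPath := isPath_def _ |>.mpr (hperm.nodup_iff.mpr hQ.support_nodup)
  have hqlen : q.length = Q.length := by
    have := congrArg length hQ'
    simp only [length_append, length_cons] at this
    simp only [q, length_append, length_cons, length_reverse]
    omega
  have := hmax _ _ <| hq.isCycle_append_detour hst hP
    (fun y hy hyq => hPC y hy ((hQC y).mp (hperm.subset hyq))) hth hhs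
  simp only [length_append, length_cons, length_concat] at this
  omega

lemma IsCycle.exists_cut_ncard_lt_indepSet [Finite V] (hC : C.IsCycle)
    (hmax : ∀ (z : V) (N : G.Walk z z), N.IsCycle → N.length ≤ C.length) {v : V}
    (hv : v ∉ C.support) :
    ∃ S X : Set V, ¬ (G.induce Sᶜ).Connected ∧ G.IsIndepSet X ∧ S.ncard < X.ncard := by
  set W := G.reachAvoiding {y | y ∈ C.support} v
  set S : Set V := {s | s ∈ C.support ∧ ∃ w ∈ W, G.Adj s w}
  have succ_notMem : ∀ s ∈ S, C.cycleSucc s ∉ S := by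
    rintro s ⟨hs, h₁, h₁W, hsh₁⟩ ⟨-, h₂, h₂W, hh₂⟩
    obtain ⟨P, hP, hPC⟩ := exists_isPath_of_mem_reachAvoiding h₁W h₂W
    exact hC.not_adj_cycleSucc_of_detour hmax hs hP hPC hsh₁ hh₂.symm
  have succ_not_adj : ∀ s ∈ S, ∀ t ∈ S, s ≠ t → ¬ G.Adj (C.cycleSucc s) (C.cycleSucc t) := by
    rintro s ⟨hs, h₂, h₂W, hsh₂⟩ t ⟨ht, h₁, h₁W, hth₁⟩ hst
    obtain ⟨P, hP, hPC⟩ := exists_isPath_of_mem_reachAvoiding h₁W h₂W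
    exact hC.not_adj_cycleSucc_cycleSucc_of_detour hmax hs ht hst hP hPC hth₁ hsh₂.symm
  have hinj : Set.InjOn C.cycleSucc S := hC.injOn_cycleSucc.mono fun _ hs => hs.1
  have hv_succ : v ∉ C.cycleSucc '' S := fun ⟨s, hsS, h⟩ =>
    hv (h ▸ hC.cycleSucc_mem_support hsS.1)
  obtain ⟨c, hcC, hcS⟩ : ∃ c ∈ C.support, c ∉ S := by
    by_cases hx : x ∈ S
    · exact ⟨_, hC.cycleSucc_mem_support hx.1, succ_notMem x hx⟩
    · exact ⟨x, C.start_mem_support, hx⟩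
  refine ⟨S, insert v (C.cycleSucc '' S), fun hconn => ?_, ?_, ?_⟩
  · exact not_reachable_induce_compl_of_attachments (A := {y | y ∈ C.support}) (S := S) hv hcC
      (fun s hs w hw hsw => ⟨hs, w, hw, hsw⟩) (fun h => hv h.1) hcS (hconn.preconnected _ _)
  · refine Set.pairwise_insert.mpr ⟨hinj.pairwise_image.mpr succ_not_adj, ?_⟩
    rintro _ ⟨s, hsS, rfl⟩ -
    have hvs : ¬ G.Adj v (C.cycleSucc s) := fun h =>
      succ_notMem s hsS ⟨hC.cycleSucc_mem_support hsS.1, v, mem_reachAvoiding_self hv, h.symm⟩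
    exact ⟨hvs, fun h => hvs h.symm⟩
  · rw [Set.ncard_insert_of_notMem hv_succ, hinj.ncard_image]
    omega

end LongestCycle

end Walk

end SimpleGraph

/-- Chvátal–Erdős: if `α(G) ≤ κ(G)` for a finite connected graph
`G` on at least 3 vertices, then `G` is hamiltonian.  The hypothesis
`α(G) ≤ κ(G)` is expressed via a natural number `k` with `α(G) ≤ k` and such
that every vertex cut has at least `k` vertices. -/
theorem stmt_4 {V : Type*} [Fintype V] [DecidableEq V] (G : SimpleGraph V)
    (h3 : 3 ≤ Fintype.card V) (hconn : G.Connected) (k : ℕ)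
    (hα : ∀ X : Set V, IsIndepSet G X → X.ncard ≤ k)
    (hκ : ∀ U : Set V, ¬ (G.induce Uᶜ).Connected → k ≤ U.ncard) :
    G.IsHamiltonian := by
  intro _
  obtain ⟨x, C, hC, hmax⟩ := SimpleGraph.exists_isCycle_forall_length_le
    (SimpleGraph.exists_isCycle_of_indepSet_le_cut h3 hconn k hα hκ)
  refine ⟨x, C, hC.isHamiltonianCycle_of_forall_mem fun v => ?_⟩
  by_contra hv
  obtain ⟨S, X, hS, hX, hlt⟩ := hC.exists_cut_ncard_lt_indepSet hmax hv
  have := hα X hX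
  have := hκ S hS
  omega
end
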